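/- arXiv:1512.00105 — 3 statements merged into one kernel-verified Lean document; each statement's English description precedes it below -/
import Mathlib

section
/- Let F(r) = (1/C)(r² - r⁴/21 + 4r⁶/315 + r⁸/945 + 74 r^{10}/429925) with C chosen so F(π/2) = 1. Then for all r ∈ (0, π/2]: 1/C ≤ F(r)/sin²r ≤ 1, and F(r)/sin²r is monotone nondecreasing on (0, π/2]. -/
open Real

/-- The unnormalized polynomial `r² - r⁴/21 + 4r⁶/315 + r⁸/945 + 74 r¹⁰/429925`. -/
noncomputable def Fpre (r : ℝ) : ℝ :=
  r ^ 2 - r ^ 4 / 21 + 4 * r ^ 6 / 315 + r ^ 8 / 945 + 74 * r ^ 10 / 429925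

/-- The normalizing constant `C`, chosen so that `F(π/2) = 1`. -/
noncomputable def Cc : ℝ := Fpre (π / 2)

/-- The normalized polynomial `F = Fpre / C`. -/
noncomputable def Ff (r : ℝ) : ℝ := Fpre r / Cc

/-!
Writing `F = Fpre / C`, the quotient `Fpre / sin²` has derivative
`sin r · (Fpre' r · sin r - 2 Fpre r · cos r) / sin⁴ r`, so monotonicity reduces to
`2 Fpre · cos ≤ Fpre' · sin` on `[0, π/2]`. Replacing `cos` by its degree-8 Taylor polynomial
(an upper bound) and `sin` by its degree-7 one (a lower bound) turns this into a polynomial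
inequality in `u = r²` that holds for `u ≤ 5/2`. The alternating Taylor bounds on `[0, ∞)` come
from integrating `cos ≤ 1` repeatedly. The bound `F / sin² ≤ 1` is monotonicity together with
`F(π/2) = 1`, and `1/C ≤ F / sin²` is `sin² ≤ Fpre`, which follows in the same way from
`sin r ≤ r - r³/6 + r⁵/120`.
-/

open Finset
open scoped Nat

-- `sinTaylor n` and `cosTaylor n` are the sums of the first `n` nonzero terms of the series.
noncomputable def sinTaylor (n : ℕ) (x : ℝ) : ℝ :=
  ∑ k ∈ range n, (-1 : ℝ) ^ k * x ^ (2 * k + 1) / (2 * k + 1)!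

noncomputable def cosTaylor (n : ℕ) (x : ℝ) : ℝ :=
  ∑ k ∈ range n, (-1 : ℝ) ^ k * x ^ (2 * k) / (2 * k)!

lemma sinTaylor_zero_right (n : ℕ) : sinTaylor n 0 = 0 := by
  simp [sinTaylor]

lemma cosTaylor_succ_zero_right (n : ℕ) : cosTaylor (n + 1) 0 = 1 := by
  simp [cosTaylor, sum_range_succ']

lemma hasDerivAt_sinTaylor (n : ℕ) (x : ℝ) : HasDerivAt (sinTaylor n) (cosTaylor n x) x := by
  unfold sinTaylor cosTaylor
  refine HasDerivAt.fun_sum fun k _ => ?_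
  refine (((hasDerivAt_pow (2 * k + 1) x).const_mul ((-1 : ℝ) ^ k)).div_const
    ((2 * k + 1)! : ℝ)).congr_deriv ?_
  rw [Nat.factorial_succ]
  push_cast
  field_simp

lemma hasDerivAt_cosTaylor (n : ℕ) (x : ℝ) :
    HasDerivAt (cosTaylor (n + 1)) (-sinTaylor n x) x := by
  have hshift : cosTaylor (n + 1) =
      fun y => ∑ k ∈ range n, (-1 : ℝ) ^ (k + 1) * y ^ (2 * k + 2) / (2 * k + 2)! + 1 := by
    ext y
    simp [cosTaylor, sum_range_succ', mul_add]
  rw [hshift, sinTaylor, ← sum_neg_distrib]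
  refine (HasDerivAt.fun_sum fun k _ => ?_).add_const 1
  refine (((hasDerivAt_pow (2 * k + 2) x).const_mul ((-1 : ℝ) ^ (k + 1))).div_const
    ((2 * k + 2)! : ℝ)).congr_deriv ?_
  rw [Nat.factorial_succ (2 * k + 1)]
  push_cast
  field_simp
  ring

lemma le_of_hasDerivAt_le {f g f' g' : ℝ → ℝ} {a x : ℝ} (hf : ∀ y, HasDerivAt f (f' y) y)
    (hg : ∀ y, HasDerivAt g (g' y) y) (ha : f a ≤ g a) (h' : ∀ y, a ≤ y → f' y ≤ g' y)
    (hx : a ≤ x) : f x ≤ g x := by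
  have hmono : MonotoneOn (g - f) (Set.Ici a) :=
    monotoneOn_of_hasDerivWithinAt_nonneg (convex_Ici a)
      (fun y _ => ((hg y).sub (hf y)).continuousAt.continuousWithinAt)
      (fun y _ => ((hg y).sub (hf y)).hasDerivWithinAt)
      (fun y hy => sub_nonneg.2 (h' y (interior_subset hy)))
  have := hmono Set.self_mem_Ici hx hx
  simp only [Pi.sub_apply] at this
  linarith

section TaylorBounds

variable {n : ℕ} {x : ℝ}

lemma sin_le_sinTaylor_of_cos_le (h : ∀ y, 0 ≤ y → cos y ≤ cosTaylor n y) (hx : 0 ≤ x) :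
    sin x ≤ sinTaylor n x :=
  le_of_hasDerivAt_le hasDerivAt_sin (hasDerivAt_sinTaylor n) (by simp [sinTaylor_zero_right])
    h hx

lemma sinTaylor_le_sin_of_cosTaylor_le (h : ∀ y, 0 ≤ y → cosTaylor n y ≤ cos y)
    (hx : 0 ≤ x) :
    sinTaylor n x ≤ sin x :=
  le_of_hasDerivAt_le (hasDerivAt_sinTaylor n) hasDerivAt_sin (by simp [sinTaylor_zero_right])
    h hx

lemma cos_le_cosTaylor_of_sinTaylor_le (h : ∀ y, 0 ≤ y → sinTaylor n y ≤ sin y)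
    (hx : 0 ≤ x) :
    cos x ≤ cosTaylor (n + 1) x :=
  le_of_hasDerivAt_le hasDerivAt_cos (hasDerivAt_cosTaylor n)
    (by simp [cosTaylor_succ_zero_right]) (fun y hy => neg_le_neg (h y hy)) hx

lemma cosTaylor_le_cos_of_sin_le (h : ∀ y, 0 ≤ y → sin y ≤ sinTaylor n y) (hx : 0 ≤ x) :
    cosTaylor (n + 1) x ≤ cos x :=
  le_of_hasDerivAt_le (hasDerivAt_cosTaylor n) hasDerivAt_cos
    (by simp [cosTaylor_succ_zero_right]) (fun y hy => neg_le_neg (h y hy)) hx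

theorem cos_le_cosTaylor_two_mul_add_one (m : ℕ) (hx : 0 ≤ x) :
    cos x ≤ cosTaylor (2 * m + 1) x := by
  induction m generalizing x with
  | zero => simpa [cosTaylor] using cos_le_one x
  | succ m ih =>
    have hsin : ∀ y, 0 ≤ y → sin y ≤ sinTaylor (2 * m + 1) y :=
      fun y hy => sin_le_sinTaylor_of_cos_le (fun z hz => ih hz) hy
    have hcos : ∀ y, 0 ≤ y → cosTaylor (2 * m + 2) y ≤ cos y :=
      fun y hy => cosTaylor_le_cos_of_sin_le hsin hy
    exact cos_le_cosTaylor_of_sinTaylor_le (fun y hy => sinTaylor_le_sin_of_cosTaylor_le hcos hy) hx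

theorem sin_le_sinTaylor_two_mul_add_one (m : ℕ) (hx : 0 ≤ x) :
    sin x ≤ sinTaylor (2 * m + 1) x :=
  sin_le_sinTaylor_of_cos_le (fun _ hy => cos_le_cosTaylor_two_mul_add_one m hy) hx

theorem sinTaylor_two_mul_add_two_le_sin (m : ℕ) (hx : 0 ≤ x) :
    sinTaylor (2 * m + 2) x ≤ sin x :=
  sinTaylor_le_sin_of_cosTaylor_le
    (fun _ hy => cosTaylor_le_cos_of_sin_le (fun _ hz => sin_le_sinTaylor_two_mul_add_one m hz) hy)
    hx

end TaylorBounds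

noncomputable def Fpre' (r : ℝ) : ℝ :=
  2 * r - 4 * r ^ 3 / 21 + 8 * r ^ 5 / 105 + 8 * r ^ 7 / 945 + 148 * r ^ 9 / 85985

lemma hasDerivAt_Fpre (r : ℝ) : HasDerivAt Fpre (Fpre' r) r := by
  refine ((((hasDerivAt_pow 2 r).sub ((hasDerivAt_pow 4 r).div_const 21)).add
      (((hasDerivAt_pow 6 r).const_mul 4).div_const 315)).add
      ((hasDerivAt_pow 8 r).div_const 945)).add
      (((hasDerivAt_pow 10 r).const_mul 74).div_const 429925) |>.congr_deriv ?_
  simp only [Fpre']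
  ring

section Fpre

variable {r : ℝ}

lemma sq_le_of_le_pi_div_two (h0 : 0 ≤ r) (h1 : r ≤ π / 2) : r ^ 2 ≤ 5 / 2 := by
  nlinarith [pi_lt_d2, mul_le_mul h1 h1 h0 (by positivity)]

lemma Fpre_nonneg (r : ℝ) : 0 ≤ Fpre r := by
  unfold Fpre
  nlinarith [sq_nonneg r, sq_nonneg (r ^ 2), sq_nonneg (r ^ 3 - 3 / 8 * r), sq_nonneg (r ^ 4),
    sq_nonneg (r ^ 5)]

lemma Fpre'_nonneg (h0 : 0 ≤ r) : 0 ≤ Fpre' r := by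
  have h7 : 0 ≤ r ^ 7 := by positivity
  have h9 : 0 ≤ r ^ 9 := by positivity
  unfold Fpre'
  nlinarith [mul_nonneg h0 (sq_nonneg (r ^ 2 - 5 / 4))]

lemma sinTaylor_three_sq_le_Fpre (h2 : r ^ 2 ≤ 5 / 2) : sinTaylor 3 r ^ 2 ≤ Fpre r := by
  set u := r ^ 2 with hu
  have hu0 : 0 ≤ u := sq_nonneg r
  have hQ : 0 ≤ 2 / 7 - 2 / 63 * u + 29 / 7560 * u ^ 2 + 25427 / 247636800 * u ^ 3 := by
    nlinarith [pow_nonneg hu0 2, pow_nonneg hu0 3]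
  have hdiff : Fpre r - sinTaylor 3 r ^ 2 =
      u ^ 2 * (2 / 7 - 2 / 63 * u + 29 / 7560 * u ^ 2 + 25427 / 247636800 * u ^ 3) := by
    simp only [Fpre, sinTaylor, sum_range_succ, sum_range_zero, hu]
    norm_num [Nat.factorial]
    ring
  nlinarith [mul_nonneg (sq_nonneg u) hQ]

lemma two_mul_Fpre_mul_cosTaylor_le (h2 : r ^ 2 ≤ 5 / 2) :
    2 * Fpre r * cosTaylor 5 r ≤ Fpre' r * sinTaylor 4 r := by
  set u := r ^ 2 with hu
  have hu0 : 0 ≤ u := sq_nonneg r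
  have hQ : 0 ≤ 4 / 7 - 2 / 63 * u + 1 / 90 * u ^ 2 + 49895401 / 109207828800 * u ^ 3
      - 11998349 / 109207828800 * u ^ 4 + 1 / 1587600 * u ^ 5
      + 137791 / 1638117432000 * u ^ 6 - 37 / 4333644000 * u ^ 7 := by
    nlinarith [pow_le_pow_left₀ hu0 h2 4, pow_le_pow_left₀ hu0 h2 7, pow_nonneg hu0 2,
      pow_nonneg hu0 3, pow_nonneg hu0 5, pow_nonneg hu0 6]
  have hdiff : Fpre' r * sinTaylor 4 r - 2 * Fpre r * cosTaylor 5 r =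
      u ^ 2 * (4 / 7 - 2 / 63 * u + 1 / 90 * u ^ 2 + 49895401 / 109207828800 * u ^ 3
      - 11998349 / 109207828800 * u ^ 4 + 1 / 1587600 * u ^ 5
      + 137791 / 1638117432000 * u ^ 6 - 37 / 4333644000 * u ^ 7) := by
    simp only [Fpre, Fpre', sinTaylor, cosTaylor, sum_range_succ, sum_range_zero, hu]
    norm_num [Nat.factorial]
    ring
  nlinarith [mul_nonneg (sq_nonneg u) hQ]

lemma sin_sq_le_Fpre (h0 : 0 ≤ r) (h1 : r ≤ π / 2) : sin r ^ 2 ≤ Fpre r := by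
  have hsin : sin r ≤ sinTaylor 3 r := sin_le_sinTaylor_two_mul_add_one 1 h0
  have hsin0 : 0 ≤ sin r := sin_nonneg_of_nonneg_of_le_pi h0 (by linarith [pi_pos])
  calc sin r ^ 2 ≤ sinTaylor 3 r ^ 2 := pow_le_pow_left₀ hsin0 hsin 2
    _ ≤ Fpre r := sinTaylor_three_sq_le_Fpre (sq_le_of_le_pi_div_two h0 h1)

lemma two_mul_Fpre_mul_cos_le (h0 : 0 ≤ r) (h1 : r ≤ π / 2) :
    2 * Fpre r * cos r ≤ Fpre' r * sin r :=
  calc 2 * Fpre r * cos r ≤ 2 * Fpre r * cosTaylor 5 r :=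
        mul_le_mul_of_nonneg_left (cos_le_cosTaylor_two_mul_add_one 2 h0)
          (mul_nonneg zero_le_two (Fpre_nonneg r))
    _ ≤ Fpre' r * sinTaylor 4 r :=
        two_mul_Fpre_mul_cosTaylor_le (sq_le_of_le_pi_div_two h0 h1)
    _ ≤ Fpre' r * sin r :=
        mul_le_mul_of_nonneg_left (sinTaylor_two_mul_add_two_le_sin 1 h0) (Fpre'_nonneg h0)

end Fpre

lemma sin_pos_of_mem_Ioc_pi_div_two {r : ℝ} (hr : r ∈ Set.Ioc 0 (π / 2)) : 0 < sin r :=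
  sin_pos_of_pos_of_lt_pi hr.1 (by linarith [hr.2, pi_pos])

lemma monotoneOn_Fpre_div_sin_sq :
    MonotoneOn (fun r => Fpre r / sin r ^ 2) (Set.Ioc 0 (π / 2)) := by
  have hderiv : ∀ r ∈ Set.Ioc 0 (π / 2), HasDerivAt (fun r => Fpre r / sin r ^ 2)
      (sin r * (Fpre' r * sin r - 2 * Fpre r * cos r) / sin r ^ 4) r := fun r hr => by
    have hsin := (sin_pos_of_mem_Ioc_pi_div_two hr).ne'
    refine ((hasDerivAt_Fpre r).div ((hasDerivAt_sin r).pow 2) (pow_ne_zero 2 hsin)).congr_deriv ?_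
    simp only [Pi.pow_apply]
    field_simp
    ring
  refine monotoneOn_of_hasDerivWithinAt_nonneg (convex_Ioc 0 (π / 2))
    (fun r hr => (hderiv r hr).continuousAt.continuousWithinAt)
    (fun r hr => (hderiv r (interior_subset hr)).hasDerivWithinAt) fun r hr => ?_
  rw [interior_Ioc] at hr
  have hsin := sin_pos_of_mem_Ioc_pi_div_two (Set.Ioo_subset_Ioc_self hr)
  have hnum := two_mul_Fpre_mul_cos_le hr.1.le hr.2.le
  exact div_nonneg (mul_nonneg hsin.le (sub_nonneg.2 hnum)) (by positivity)

lemma Ff_div_sin_sq (r : ℝ) : Ff r / sin r ^ 2 = Fpre r / sin r ^ 2 / Cc := by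
  rw [Ff, div_div, div_div, mul_comm]

lemma one_le_Cc : 1 ≤ Cc := by
  simpa [Cc] using sin_sq_le_Fpre (r := π / 2) (by positivity) le_rfl

/-- For all `r ∈ (0, π/2]`: `1/C ≤ F(r)/sin²r ≤ 1`, and `F/sin²r` is monotone
nondecreasing on `(0, π/2]`. -/
theorem stmt9 :
    (∀ r ∈ Set.Ioc 0 (π / 2), 1 / Cc ≤ Ff r / Real.sin r ^ 2 ∧ Ff r / Real.sin r ^ 2 ≤ 1) ∧
    MonotoneOn (fun r => Ff r / Real.sin r ^ 2) (Set.Ioc 0 (π / 2)) := by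
  have hC : 0 < Cc := zero_lt_one.trans_le one_le_Cc
  have hmono : MonotoneOn (fun r => Ff r / sin r ^ 2) (Set.Ioc 0 (π / 2)) := by
    simp only [Ff_div_sin_sq]
    exact fun a ha b hb hab =>
      div_le_div_of_nonneg_right (monotoneOn_Fpre_div_sin_sq ha hb hab) hC.le
  have hend : π / 2 ∈ Set.Ioc 0 (π / 2) := ⟨by positivity, le_rfl⟩
  refine ⟨fun r hr => ⟨?_, ?_⟩, hmono⟩
  · have hsin : 0 < sin r ^ 2 := pow_pos (sin_pos_of_mem_Ioc_pi_div_two hr) 2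
    rw [Ff_div_sin_sq, div_le_div_iff_of_pos_right hC, le_div_iff₀ hsin, one_mul]
    exact sin_sq_le_Fpre hr.1.le hr.2
  · have h := hmono hr hend hr.2
    dsimp only at h
    rwa [show Ff (π / 2) = 1 from div_self hC.ne', sin_pi_div_two, one_pow, div_one] at h
end

section
/- Let n ≥ 2, k ≥ 1 an integer, and c a real number. The function v(s) = (nc / (2(2k-1)(n+2k))) · Σ_{j=0}^{k} a_j sin^{2j}s, where a_k = 1 and a_j = (2(j+1)/(2j-1)) a_{j+1} for 0 ≤ j < k, satisfies the ODE v'' + (n-1) cot s · v' + n v = -(nc/2) sin^{2k}s on (0, π). -/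
/-!
On functions of the polar angle, `Δ + n` sends `sin^{m+2} s` to
`(m+2)(m+n) sin^m s + (n - (m+2)(m+n+1)) sin^{m+2} s` (using `cos² = 1 - sin²`).
For `m + 2 = 2j` the first coefficient is `2j(n+2j-2)`, and the recurrence for `a` says precisely
that `a_{j}` times this coefficient cancels the `sin^{2j-2}` term produced by `a_{j-1}`.
So `(Δ + n) Σ a_j sin^{2j}` telescopes to `a_k (1-2k)(n+2k) sin^{2k}`, which the normalising
constant turns into `-(nc/2) sin^{2k}`.
-/

open Real

/-- `Δ + n` of the round sphere `S^n`, acting on functions of the polar angle `s`. -/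
noncomputable def zonalJacobiOp (n : ℝ) (f : ℝ → ℝ) (s : ℝ) : ℝ :=
  deriv (deriv f) s + (n - 1) * (cos s / sin s) * deriv f s + n * f s

section
variable (n : ℝ)

theorem zonalJacobiOp_sum {ι : Type*} (t : Finset ι) (c : ι → ℝ) {f : ι → ℝ → ℝ}
    (hf : ∀ i ∈ t, ContDiff ℝ 2 (f i)) (s : ℝ) :
    zonalJacobiOp n (fun x => ∑ i ∈ t, c i * f i x) s =
      ∑ i ∈ t, c i * zonalJacobiOp n (f i) s := by
  have hf' : ∀ i ∈ t, Differentiable ℝ (f i) ∧ Differentiable ℝ (deriv (f i)) :=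
    fun i hi => ⟨(hf i hi).differentiable two_ne_zero,
      (ContDiff.deriv' (n := 1) (hf i hi)).differentiable one_ne_zero⟩
  have h₁ : deriv (fun x => ∑ i ∈ t, c i * f i x) = fun x => ∑ i ∈ t, c i * deriv (f i) x :=
    funext fun x => (HasDerivAt.fun_sum fun i hi =>
      ((hf' i hi).1 x).hasDerivAt.const_mul (c i)).deriv
  have h₂ : deriv (fun x => ∑ i ∈ t, c i * deriv (f i) x) s =
      ∑ i ∈ t, c i * deriv (deriv (f i)) s :=
    (HasDerivAt.fun_sum fun i hi => ((hf' i hi).2 s).hasDerivAt.const_mul (c i)).deriv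
  simp only [zonalJacobiOp, h₁, h₂, Finset.mul_sum, ← Finset.sum_add_distrib]
  exact Finset.sum_congr rfl fun i _ => by ring

theorem zonalJacobiOp_one (s : ℝ) : zonalJacobiOp n (fun _ => 1) s = n := by
  simp [zonalJacobiOp]

theorem zonalJacobiOp_sin_pow_add_two (m : ℕ) {s : ℝ} (hs : sin s ≠ 0) :
    zonalJacobiOp n (fun t => sin t ^ (m + 2)) s =
      (m + 2) * (m + n) * sin s ^ m + (n - (m + 2) * (m + n + 1)) * sin s ^ (m + 2) := by
  have h₁ : deriv (fun t => sin t ^ (m + 2)) = fun t => (m + 2) * sin t ^ (m + 1) * cos t :=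
    funext fun t => by simp
  have h₂ : HasDerivAt (fun t => (m + 2) * sin t ^ (m + 1) * cos t)
      ((m + 2) * ((m + 1) * sin s ^ m * cos s) * cos s + (m + 2) * sin s ^ (m + 1) * -sin s) s := by
    refine ((((hasDerivAt_sin s).fun_pow (m + 1)).const_mul ((m : ℝ) + 2)).fun_mul
      (hasDerivAt_cos s)).congr_deriv ?_
    simp
  rw [zonalJacobiOp, h₁, h₂.deriv]
  field_simp
  rw [cos_sq']
  ring

theorem sum_range_mul_zonalJacobiOp_sin_pow (a : ℕ → ℝ) (m : ℕ)
    (ha : ∀ j < m, a j = (2 * ((j : ℝ) + 1) / (2 * j - 1)) * a (j + 1)) {s : ℝ}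
    (hs : sin s ≠ 0) :
    ∑ j ∈ Finset.range (m + 1), a j * zonalJacobiOp n (fun t => sin t ^ (2 * j)) s =
      a m * ((1 - 2 * m) * (n + 2 * m)) * sin s ^ (2 * m) := by
  induction m with
  | zero => simp [zonalJacobiOp_one]
  | succ m ih =>
    have hrec : a m * (2 * m - 1) = 2 * (m + 1) * a (m + 1) := by
      have hm : (2 * m - 1 : ℝ) ≠ 0 := by
        rw [sub_ne_zero]
        exact_mod_cast (by omega : 2 * m ≠ 1)
      rw [ha m m.lt_succ_self]
      field_simp
    rw [Finset.sum_range_succ, ih fun j hj => ha j (by omega), mul_add 2 m 1, mul_one,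
      zonalJacobiOp_sin_pow_add_two n _ hs]
    push_cast
    linear_combination (-(n + 2 * m) * sin s ^ (2 * m)) * hrec
end

theorem stmt15_general (n k : ℕ) (hk : 1 ≤ k) (c : ℝ)
    (a : ℕ → ℝ) (hak : a k = 1)
    (harec : ∀ j, j < k → a j = (2 * ((j : ℝ) + 1) / (2 * j - 1)) * a (j + 1))
    (v : ℝ → ℝ)
    (hv : v = fun s => (n * c / (2 * (2 * (k : ℝ) - 1) * (n + 2 * k))) *
      ∑ j ∈ Finset.range (k + 1), a j * Real.sin s ^ (2 * j))
    (s : ℝ) (hs : 0 < s) (hs' : s < π) :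
    deriv (deriv v) s + ((n : ℝ) - 1) * (Real.cos s / Real.sin s) * deriv v s + n * v s
      = -((n : ℝ) * c / 2) * Real.sin s ^ (2 * k) := by
  set K : ℝ := n * c / (2 * (2 * (k : ℝ) - 1) * (n + 2 * k))
  have hK : K * ((1 - 2 * k) * (n + 2 * k)) = -(n * c / 2) := by
    have h2k : (2 * k - 1 : ℝ) ≠ 0 := by
      rw [sub_ne_zero]
      exact_mod_cast (by omega : 2 * k ≠ 1)
    have hnk : (n + 2 * k : ℝ) ≠ 0 := by positivity
    simp only [K]
    field_simp
    ring
  have hv' : v = fun t => ∑ j ∈ Finset.range (k + 1), (K * a j) * sin t ^ (2 * j) := by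
    simp only [hv, Finset.mul_sum, mul_assoc]
  have hsin : sin s ≠ 0 := (sin_pos_of_pos_of_lt_pi hs hs').ne'
  show zonalJacobiOp n v s = _
  rw [hv', zonalJacobiOp_sum _ _ _ (fun j _ => contDiff_sin.pow _)]
  simp only [mul_assoc, ← Finset.mul_sum]
  rw [sum_range_mul_zonalJacobiOp_sin_pow n a k harec hsin, hak]
  linear_combination sin s ^ (2 * k) * hK

/-- Let `n ≥ 2`, `k ≥ 1`, `c ∈ ℝ`, and let `a : ℕ → ℝ` satisfy `a k = 1` and
`a j = (2(j+1)/(2j-1)) a (j+1)` for `j < k`. Then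
`v(s) = (nc/(2(2k-1)(n+2k))) Σ_{j=0}^k a_j sin^{2j}s` satisfies
`v'' + (n-1) cot s · v' + n v = -(nc/2) sin^{2k}s` on `(0, π)`. -/
theorem stmt15 (n k : ℕ) (hn : 2 ≤ n) (hk : 1 ≤ k) (c : ℝ)
    (a : ℕ → ℝ) (hak : a k = 1)
    (harec : ∀ j, j < k → a j = (2 * ((j : ℝ) + 1) / (2 * j - 1)) * a (j + 1))
    (v : ℝ → ℝ)
    (hv : v = fun s => (n * c / (2 * (2 * (k : ℝ) - 1) * (n + 2 * k))) *
      ∑ j ∈ Finset.range (k + 1), a j * Real.sin s ^ (2 * j))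
    (s : ℝ) (hs : 0 < s) (hs' : s < π) :
    deriv (deriv v) s + ((n : ℝ) - 1) * (Real.cos s / Real.sin s) * deriv v s + n * v s
      = -((n : ℝ) * c / 2) * Real.sin s ^ (2 * k) :=
  stmt15_general n k hk c a hak harec v hv s hs hs'
end

section
/- Let n ≥ 2, k ≥ 1, c real, and let v be the explicit solution v(s) = (nc/(2(2k-1)(n+2k))) Σ_{j=0}^k a_j sin^{2j}s with a_k = 1 and a_j = (2(j+1)/(2j-1)) a_{j+1}. Then cot s · v'(s) - v''(s) = (nkc/(n+2k)) sin^{2k}s for all s ∈ (0, π). -/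
/-!
With `t = sin² s`, a function `v(s) = P(t)` satisfies `cot s · v' − v'' = 2t P'(t) − 4t(1 − t) P''(t)`,
because `cos² s − cos 2s = t`. For the polynomial `P = Σ a_j t^j` the `t^m`-coefficient of the right
side is `2m(2m − 1) a_m − 4m(m + 1) a_{m+1}`, which the recurrence kills for `m < k`; only
`2k(2k − 1) t^k` survives, and the normalising constant of `v` turns it into `nkc/(n + 2k) · sin^{2k} s`.
-/

open Real Polynomial

theorem two_mul_natCast_sub_one_ne_zero {R : Type*} [Ring R] [CharZero R] (m : ℕ) :
    (2 * (m : R) - 1) ≠ 0 := fun h =>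
  absurd (by exact_mod_cast sub_eq_zero.mp h : 2 * m = 1) (by omega)

theorem cot_mul_deriv_sub_deriv_deriv_comp_sin_sq {P : ℝ → ℝ} (h₁ : Differentiable ℝ P)
    (h₂ : Differentiable ℝ (deriv P)) {s : ℝ} (hs : sin s ≠ 0) :
    cos s / sin s * deriv (fun x => P (sin x ^ 2)) s - deriv (deriv fun x => P (sin x ^ 2)) s
      = 2 * sin s ^ 2 * deriv P (sin s ^ 2)
        - 4 * sin s ^ 2 * (1 - sin s ^ 2) * deriv (deriv P) (sin s ^ 2) := by
  have hsin_sq (x : ℝ) : HasDerivAt (fun x => sin x ^ 2) (2 * sin x * cos x) x := by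
    simpa using (hasDerivAt_sin x).fun_pow 2
  have hderiv :
      deriv (fun x => P (sin x ^ 2)) = fun x => deriv P (sin x ^ 2) * (2 * sin x * cos x) :=
    funext fun x => ((h₁ _).hasDerivAt.comp x (hsin_sq x)).deriv
  have hderiv₂ : HasDerivAt (fun x => deriv P (sin x ^ 2) * (2 * sin x * cos x))
      (deriv (deriv P) (sin s ^ 2) * (2 * sin s * cos s) * (2 * sin s * cos s)
        + deriv P (sin s ^ 2) * (2 * cos s * cos s - 2 * sin s * sin s)) s := by
    refine (((h₂ _).hasDerivAt.comp s (hsin_sq s)).fun_mul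
      (((hasDerivAt_sin s).const_mul 2).fun_mul (hasDerivAt_cos s))).congr_deriv ?_
    simp only [Function.comp]
    ring
  rw [hderiv, hderiv₂.deriv, ← cos_sq']
  field_simp
  ring

noncomputable def sinSqOperator {R : Type*} [CommRing R] (p : R[X]) : R[X] :=
  2 * X * derivative p - 4 * X * (1 - X) * derivative (derivative p)

theorem coeff_sinSqOperator {R : Type*} [CommRing R] (p : R[X]) (m : ℕ) :
    (sinSqOperator p).coeff m
      = 2 * m * (2 * m - 1) * p.coeff m - 4 * m * (m + 1) * p.coeff (m + 1) := by
  rcases m with _ | _ | m <;>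
    simp [sinSqOperator, mul_assoc, mul_sub, sub_mul, coeff_derivative] <;> ring

theorem sinSqOperator_C_mul {R : Type*} [CommRing R] (r : R) (p : R[X]) :
    sinSqOperator (C r * p) = C r * sinSqOperator p := by
  simp only [sinSqOperator, derivative_C_mul]
  ring

theorem cot_mul_deriv_sub_deriv_deriv_eval_sin_sq (p : ℝ[X]) {s : ℝ} (hs : sin s ≠ 0) :
    cos s / sin s * deriv (fun x => p.eval (sin x ^ 2)) s
        - deriv (deriv fun x => p.eval (sin x ^ 2)) s
      = (sinSqOperator p).eval (sin s ^ 2) := by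
  have hderiv (q : ℝ[X]) : deriv (fun t => q.eval t) = fun t => q.derivative.eval t :=
    _root_.funext fun _ => q.deriv
  have h := cot_mul_deriv_sub_deriv_deriv_comp_sin_sq p.differentiable
    (by rw [hderiv]; exact p.derivative.differentiable) hs
  rw [h, hderiv, hderiv]
  simp only [sinSqOperator, eval_sub, eval_mul, eval_X, eval_ofNat, eval_one]

theorem sinSqOperator_sum_eq {K : Type*} [Field K] [CharZero K] {k : ℕ} {a : ℕ → K}
    (hak : a k = 1) (harec : ∀ j, j < k → a j = (2 * ((j : K) + 1) / (2 * j - 1)) * a (j + 1)) :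
    sinSqOperator (∑ j ∈ Finset.range (k + 1), C (a j) * X ^ j : K[X])
      = C (2 * (k : K) * (2 * k - 1)) * X ^ k := by
  ext m
  simp only [coeff_sinSqOperator, finsetSum_coeff, coeff_C_mul_X_pow, Finset.sum_ite_eq,
    Finset.mem_range]
  rcases lt_trichotomy m k with hm | rfl | hm
  · have hm' : (2 * (m : K) - 1) ≠ 0 := two_mul_natCast_sub_one_ne_zero m
    rw [if_pos (by omega), if_pos (by omega), if_neg hm.ne, harec m hm]
    field_simp
    ring
  · simp [hak]
  · simp [show ¬ m < k + 1 by omega, show ¬ m + 1 < k + 1 by omega, hm.ne']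

theorem stmt16_general (n k : ℕ) (c : ℝ)
    (a : ℕ → ℝ) (hak : a k = 1)
    (harec : ∀ j, j < k → a j = (2 * ((j : ℝ) + 1) / (2 * j - 1)) * a (j + 1))
    (v : ℝ → ℝ)
    (hv : v = fun s => (n * c / (2 * (2 * (k : ℝ) - 1) * (n + 2 * k))) *
      ∑ j ∈ Finset.range (k + 1), a j * Real.sin s ^ (2 * j))
    (s : ℝ) (hs : 0 < s) (hs' : s < π) :
    (Real.cos s / Real.sin s) * deriv v s - deriv (deriv v) s
      = ((n : ℝ) * k * c / (n + 2 * k)) * Real.sin s ^ (2 * k) := by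
  set A : ℝ := n * c / (2 * (2 * (k : ℝ) - 1) * (n + 2 * k))
  have hv_eval :
      v = fun x => (C A * ∑ j ∈ Finset.range (k + 1), C (a j) * X ^ j).eval (sin x ^ 2) := by
    simp [hv, eval_finsetSum, pow_mul]
  rw [hv_eval, cot_mul_deriv_sub_deriv_deriv_eval_sin_sq _ (sin_pos_of_pos_of_lt_pi hs hs').ne',
    sinSqOperator_C_mul, sinSqOperator_sum_eq hak harec]
  have hA : A * (2 * k * (2 * k - 1)) = n * k * c / (n + 2 * k) := by
    have hk : (2 * (k : ℝ) - 1) ≠ 0 := two_mul_natCast_sub_one_ne_zero k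
    rcases eq_or_ne ((n : ℝ) + 2 * k) 0 with h | h
    · simp [A, h]
    · simp only [A]
      field_simp
  simp only [eval_mul, eval_C, eval_pow, eval_X, ← pow_mul, ← mul_assoc, hA]

/-- Let `n ≥ 2`, `k ≥ 1`, `c ∈ ℝ`, and let `a : ℕ → ℝ` satisfy `a k = 1` and
`a j = (2(j+1)/(2j-1)) a (j+1)` for `j < k`. Then
the explicit solution
`v(s) = (nc/(2(2k-1)(n+2k))) Σ_{j=0}^k a_j sin^{2j}s` satisfies
`cot s · v'(s) - v''(s) = (nkc/(n+2k)) sin^{2k}s` for all `s ∈ (0, π)`. -/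
theorem stmt16 (n k : ℕ) (hn : 2 ≤ n) (hk : 1 ≤ k) (c : ℝ)
    (a : ℕ → ℝ) (hak : a k = 1)
    (harec : ∀ j, j < k → a j = (2 * ((j : ℝ) + 1) / (2 * j - 1)) * a (j + 1))
    (v : ℝ → ℝ)
    (hv : v = fun s => (n * c / (2 * (2 * (k : ℝ) - 1) * (n + 2 * k))) *
      ∑ j ∈ Finset.range (k + 1), a j * Real.sin s ^ (2 * j))
    (s : ℝ) (hs : 0 < s) (hs' : s < π) :
    (Real.cos s / Real.sin s) * deriv v s - deriv (deriv v) s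
      = ((n : ℝ) * k * c / (n + 2 * k)) * Real.sin s ^ (2 * k) :=
  stmt16_general n k c a hak harec v hv s hs hs'
end
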